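/- Let Θ be a p × p real matrix with operator norm ‖Θ‖_op = γ < 1, and let Σ_Z be symmetric positive definite. If Σ is the unique symmetric positive definite solution of the Lyapunov equation Σ = Θ Σ Θᵀ + Σ_Z, then the condition number satisfies κ(Σ) ≤ κ(Σ_Z) · (1 + γ²)/(1 − γ²). -/

import Mathlib

open scoped BigOperators

noncomputable def frob {m n : Type*} [Fintype m] [Fintype n] (A : Matrix m n ℝ) : ℝ :=
  Real.sqrt (∑ i, ∑ j, (A i j)^2)

noncomputable def opNorm {m n : Type*} [Fintype m] [Fintype n] [DecidableEq m] [DecidableEq n]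
    (A : Matrix m n ℝ) : ℝ :=
  ‖LinearMap.toContinuousLinearMap (Matrix.toEuclideanLin A)‖

noncomputable def nuclearNorm {m n : Type*} [Fintype m] [Fintype n] [DecidableEq n]
    (A : Matrix m n ℝ) : ℝ :=
  ∑ i, Real.sqrt ((show (A.transpose * A).IsHermitian from by
    simpa [Matrix.conjTranspose_eq_transpose_of_trivial] using Matrix.isHermitian_conjTranspose_mul_self A).eigenvalues i)

noncomputable def colSpace {m n : Type*} [Fintype m] [Fintype n] [DecidableEq n]
    (A : Matrix m n ℝ) : Submodule ℝ (EuclideanSpace ℝ m) :=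
  LinearMap.range (Matrix.toEuclideanLin A)

noncomputable def projMat {m : Type*} [Fintype m] [DecidableEq m]
    (S : Submodule ℝ (EuclideanSpace ℝ m)) : Matrix m m ℝ :=
  Matrix.toEuclideanLin.symm (S.subtype ∘ₗ (S.orthogonalProjectionOnto).toLinearMap)

noncomputable def PrPerp {m n : Type*} [Fintype m] [Fintype n] [DecidableEq m] [DecidableEq n]
    (A B : Matrix m n ℝ) : Matrix m n ℝ :=
  projMat (colSpace A).orthogonal * B * projMat (colSpace A.transpose).orthogonal

noncomputable def Pr {m n : Type*} [Fintype m] [Fintype n] [DecidableEq m] [DecidableEq n]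
    (A B : Matrix m n ℝ) : Matrix m n ℝ :=
  B - PrPerp A B

noncomputable def maxEig {k : Type*} [Fintype k] [DecidableEq k] (M : Matrix k k ℝ) : ℝ :=
  sSup (spectrum ℝ M)
noncomputable def minEig {k : Type*} [Fintype k] [DecidableEq k] (M : Matrix k k ℝ) : ℝ :=
  sInf (spectrum ℝ M)
noncomputable def condNum {k : Type*} [Fintype k] [DecidableEq k] (M : Matrix k k ℝ) : ℝ :=
  maxEig M / minEig M

/-!
In the Loewner order, `λ_min(M) • 1 ≤ M ≤ λ_max(M) • 1` characterises the extreme eigenvalues of a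
symmetric matrix. Since `Θ Σ Θᵀ ≥ 0`, the Lyapunov equation gives `Σ ≥ Σ_Z`, hence
`λ_min(Σ) ≥ λ_min(Σ_Z)`. Conjugating `Σ ≤ λ_max(Σ) • 1` by `Θ` and using `Θ Θᵀ ≤ γ² • 1` gives
`Σ ≤ (γ² λ_max(Σ) + λ_max(Σ_Z)) • 1`, hence `λ_max(Σ) (1 - γ²) ≤ λ_max(Σ_Z)`. So
`κ(Σ) ≤ κ(Σ_Z) / (1 - γ²)`, which is at most `κ(Σ_Z) (1 + γ²) / (1 - γ²)`.
-/

open scoped MatrixOrder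

namespace Matrix

variable {n : Type*} [Fintype n] [DecidableEq n]

lemma spectrum_real_nonempty [Nonempty n] {M : Matrix n n ℝ} (hM : M.IsHermitian) :
    (spectrum ℝ M).Nonempty := by
  rw [hM.spectrum_real_eq_range_eigenvalues]
  exact Set.range_nonempty _

lemma maxEig_le_iff [Nonempty n] {M : Matrix n n ℝ} (hM : M.IsHermitian) {r : ℝ} :
    maxEig M ≤ r ↔ M ≤ algebraMap ℝ _ r := by
  rw [le_algebraMap_iff_spectrum_le hM.isSelfAdjoint]
  exact csSup_le_iff finite_real_spectrum.bddAbove (spectrum_real_nonempty hM)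

lemma le_minEig_iff [Nonempty n] {M : Matrix n n ℝ} (hM : M.IsHermitian) {r : ℝ} :
    r ≤ minEig M ↔ algebraMap ℝ _ r ≤ M := by
  rw [algebraMap_le_iff_le_spectrum hM.isSelfAdjoint]
  exact le_csInf_iff finite_real_spectrum.bddBelow (spectrum_real_nonempty hM)

lemma PosDef.minEig_pos [Nonempty n] {M : Matrix n n ℝ} (hM : M.PosDef) : 0 < minEig M := by
  obtain ⟨i, hi⟩ : minEig M ∈ Set.range hM.isHermitian.eigenvalues := by
    rw [← hM.isHermitian.spectrum_real_eq_range_eigenvalues]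
    exact (spectrum_real_nonempty hM.isHermitian).csInf_mem finite_real_spectrum
  exact hi ▸ hM.eigenvalues_pos i

lemma condNum_of_isEmpty [IsEmpty n] (M : Matrix n n ℝ) : condNum M = 0 := by
  simp [condNum, maxEig]

lemma opNorm_transpose {m : Type*} [Fintype m] [DecidableEq m] (A : Matrix m n ℝ) :
    opNorm Aᵀ = opNorm A := by
  have h := l2_opNorm_conjTranspose A
  rw [conjTranspose_eq_transpose_of_trivial] at h
  exact h

lemma one_sub_opNorm_sq_pos {m : Type*} [Fintype m] [DecidableEq m] {A : Matrix m n ℝ}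
    (hA : opNorm A < 1) : 0 < 1 - opNorm A ^ 2 := by
  have : 0 ≤ opNorm A := norm_nonneg _
  nlinarith

open scoped Matrix.Norms.L2Operator in
lemma mul_transpose_le_opNorm_sq [Nonempty n] (A : Matrix n n ℝ) :
    A * Aᵀ ≤ algebraMap ℝ _ (opNorm A ^ 2) := by
  have hnorm : ‖A * Aᵀ‖ = opNorm A ^ 2 := by
    have := l2_opNorm_conjTranspose_mul_self Aᵀ
    rw [conjTranspose_eq_transpose_of_trivial, transpose_transpose] at this
    rw [this, ← sq]
    exact congrArg (· ^ 2) (opNorm_transpose A)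
  have hsymm : (A * Aᵀ).IsHermitian := by
    simpa using isHermitian_mul_conjTranspose_self A
  rw [le_algebraMap_iff_spectrum_le hsymm.isSelfAdjoint]
  intro x hx
  calc x ≤ ‖x‖ := Real.le_norm_self x
    _ ≤ ‖A * Aᵀ‖ := spectrum.norm_le_norm_of_mem hx
    _ = opNorm A ^ 2 := hnorm

lemma PosSemidef.maxEig_nonneg {M : Matrix n n ℝ} (hM : M.PosSemidef) : 0 ≤ maxEig M :=
  Real.sSup_nonneg fun _ hx ↦ (posSemidef_iff_isHermitian_and_spectrum_nonneg.1 hM).2 hx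

lemma PosSemidef.minEig_nonneg {M : Matrix n n ℝ} (hM : M.PosSemidef) : 0 ≤ minEig M :=
  Real.sInf_nonneg fun _ hx ↦ (posSemidef_iff_isHermitian_and_spectrum_nonneg.1 hM).2 hx

lemma PosSemidef.condNum_nonneg {M : Matrix n n ℝ} (hM : M.PosSemidef) : 0 ≤ condNum M :=
  div_nonneg hM.maxEig_nonneg hM.minEig_nonneg

section Lyapunov

variable {Θ Sig SigZ : Matrix n n ℝ}

lemma minEig_le_minEig_of_lyapunov [Nonempty n] (hSig : Sig.PosSemidef) (hZ : SigZ.IsHermitian)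
    (h : Sig = Θ * Sig * Θᵀ + SigZ) : minEig SigZ ≤ minEig Sig := by
  rw [le_minEig_iff hSig.isHermitian]
  have hconj : 0 ≤ Θ * Sig * Θᵀ := by
    rw [← conjTranspose_eq_transpose_of_trivial, ← star_eq_conjTranspose]
    exact star_right_conjugate_nonneg (nonneg_iff_posSemidef.2 hSig) Θ
  calc algebraMap ℝ _ (minEig SigZ) ≤ SigZ := (le_minEig_iff hZ).1 le_rfl
    _ ≤ Θ * Sig * Θᵀ + SigZ := le_add_of_nonneg_left hconj
    _ = Sig := h.symm

lemma maxEig_mul_one_sub_sq_le_of_lyapunov [Nonempty n] (hSig : Sig.PosSemidef)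
    (hZ : SigZ.IsHermitian) (h : Sig = Θ * Sig * Θᵀ + SigZ) : maxEig Sig * (1 - opNorm Θ ^ 2) ≤ maxEig SigZ := by
  set a := maxEig Sig
  have hconj : Θ * Sig * Θᵀ ≤ algebraMap ℝ _ (a * opNorm Θ ^ 2) := by
    calc Θ * Sig * Θᵀ ≤ Θ * algebraMap ℝ _ a * Θᵀ := by
          rw [← conjTranspose_eq_transpose_of_trivial, ← star_eq_conjTranspose]
          exact star_right_conjugate_le_conjugate ((maxEig_le_iff hSig.isHermitian).1 le_rfl) Θ
      _ = a • (Θ * Θᵀ) := by simp [Algebra.algebraMap_eq_smul_one]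
      _ ≤ a • algebraMap ℝ _ (opNorm Θ ^ 2) :=
          smul_le_smul_of_nonneg_left (mul_transpose_le_opNorm_sq Θ) hSig.maxEig_nonneg
      _ = algebraMap ℝ _ (a * opNorm Θ ^ 2) := by simp [Algebra.algebraMap_eq_smul_one, mul_smul]
  have hSig_le : Sig ≤ algebraMap ℝ _ (a * opNorm Θ ^ 2 + maxEig SigZ) := by
    rw [map_add, h]
    exact add_le_add hconj ((maxEig_le_iff hZ).1 le_rfl)
  have := (maxEig_le_iff hSig.isHermitian).2 hSig_le
  linarith

lemma condNum_le_div_of_lyapunov (hSig : Sig.PosSemidef) (hZ : SigZ.PosDef) (hΘ : opNorm Θ < 1)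
    (h : Sig = Θ * Sig * Θᵀ + SigZ) : condNum Sig ≤ condNum SigZ / (1 - opNorm Θ ^ 2) := by
  cases isEmpty_or_nonempty n
  · simp [condNum_of_isEmpty]
  have hmax := maxEig_mul_one_sub_sq_le_of_lyapunov hSig hZ.isHermitian h
  calc maxEig Sig / minEig Sig ≤ maxEig Sig / minEig SigZ :=
        div_le_div_of_nonneg_left hSig.maxEig_nonneg hZ.minEig_pos
          (minEig_le_minEig_of_lyapunov hSig hZ.isHermitian h)
    _ ≤ maxEig SigZ / (1 - opNorm Θ ^ 2) / minEig SigZ :=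
        div_le_div_of_nonneg_right ((le_div_iff₀ (one_sub_opNorm_sq_pos hΘ)).2 hmax) hZ.minEig_pos.le
    _ = condNum SigZ / (1 - opNorm Θ ^ 2) := div_right_comm _ _ _

end Lyapunov

end Matrix

theorem condNum_lyapunov_le_general {p : ℕ} (Θ SigZ Sig : Matrix (Fin p) (Fin p) ℝ) (γ : ℝ)
    (hγ : opNorm Θ = γ) (hγ1 : γ < 1)
    (hZpd : SigZ.PosDef)
    (hSpd : Sig.PosDef)
    (hLyap : Sig = Θ * Sig * Θ.transpose + SigZ) :
    condNum Sig ≤ condNum SigZ * (1 + γ ^ 2) / (1 - γ ^ 2) := by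
  subst hγ
  calc condNum Sig ≤ condNum SigZ / (1 - opNorm Θ ^ 2) :=
        Matrix.condNum_le_div_of_lyapunov hSpd.posSemidef hZpd hγ1 hLyap
    _ ≤ condNum SigZ * (1 + opNorm Θ ^ 2) / (1 - opNorm Θ ^ 2) :=
        div_le_div_of_nonneg_right
          (le_mul_of_one_le_right hZpd.posSemidef.condNum_nonneg
            (le_add_of_nonneg_right (sq_nonneg _)))
          (Matrix.one_sub_opNorm_sq_pos hγ1).le

/-- Condition-number bound for the solution of the Lyapunov equation:
κ(Σ) ≤ κ(Σ_Z)·(1 + γ²)/(1 − γ²). -/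
theorem condNum_lyapunov_le {p : ℕ} (Θ SigZ Sig : Matrix (Fin p) (Fin p) ℝ) (γ : ℝ)
    (hγ : opNorm Θ = γ) (hγ1 : γ < 1)
    (hZ : SigZ.IsSymm) (hZpd : SigZ.PosDef)
    (hS : Sig.IsSymm) (hSpd : Sig.PosDef)
    (hLyap : Sig = Θ * Sig * Θ.transpose + SigZ) :
    condNum Sig ≤ condNum SigZ * (1 + γ ^ 2) / (1 - γ ^ 2) :=
  condNum_lyapunov_le_general Θ SigZ Sig γ hγ hγ1 hZpd hSpd hLyap
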